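/- arXiv:1206.2536 — 2 statements merged into one kernel-verified Lean document; each statement's English description precedes it below -/
import Mathlib

section
/- For any CPTP map Φ on a Hilbert space of dimension N, and any matrix M with ‖M‖_HS = 1, there exists a positive semidefinite matrix P with ‖P‖_HS = 1 such that ‖Φ(M)‖_HS ≤ ‖Φ(P)‖_HS. -/
open Matrix
open scoped BigOperators Kronecker ComplexOrder

noncomputable section

/-- Singular values of a square complex matrix: square roots of eigenvalues of `X * Xᴴ`. -/
def singularValues {n : Type*} [Fintype n] [DecidableEq n] (X : Matrix n n ℂ) : n → ℝ :=
  fun i => Real.sqrt ((Matrix.posSemidef_self_mul_conjTranspose X).1.eigenvalues i)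

/-- Shannon entropy of the normalization of a nonnegative vector. -/
def shannonH {ι : Type*} [Fintype ι] (v : ι → ℝ) : ℝ :=
  -∑ i, (v i / ∑ j, v j) * Real.log (v i / ∑ j, v j)

/-- Rényi entropy of order `q` of the normalization of a nonnegative vector. -/
def renyiH {ι : Type*} [Fintype ι] (q : ℝ) (v : ι → ℝ) : ℝ :=
  (1 / (1 - q)) * Real.log (∑ i, (v i / ∑ j, v j) ^ q)

/-- Unnormalized (von Neumann–type) entropy of the singular value vector. -/
def vnEntropy {n : Type*} [Fintype n] [DecidableEq n] (M : Matrix n n ℂ) : ℝ :=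
  -∑ i, singularValues M i * Real.log (singularValues M i)

/-- A quantum channel: completely positive (Kraus form) and trace preserving. -/
def IsCPTP {N : ℕ} (Φ : Matrix (Fin N) (Fin N) ℂ →ₗ[ℂ] Matrix (Fin N) (Fin N) ℂ) : Prop :=
  ∃ (k : ℕ) (A : Fin k → Matrix (Fin N) (Fin N) ℂ),
    (∀ ρ, Φ ρ = ∑ i, A i * ρ * (A i)ᴴ) ∧ (∑ i, (A i)ᴴ * A i = 1)

/-- Density matrix predicate. -/
def IsDensityMatrix {n : Type*} [Fintype n] [DecidableEq n] (ρ : Matrix n n ℂ) : Prop :=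
  ρ.PosSemidef ∧ ρ.trace = 1

/-- The Choi (dynamical) matrix of a linear map on matrices. -/
def choiMatrix {N : ℕ} (Φ : Matrix (Fin N) (Fin N) ℂ →ₗ[ℂ] Matrix (Fin N) (Fin N) ℂ) :
    Matrix (Fin N × Fin N) (Fin N × Fin N) ℂ :=
  fun p q => Φ (Matrix.single p.2 q.2 1) p.1 q.1

/-- The superoperator matrix of a linear map on matrices. -/
def superMatrix {N : ℕ} (Φ : Matrix (Fin N) (Fin N) ℂ →ₗ[ℂ] Matrix (Fin N) (Fin N) ℂ) :
    Matrix (Fin N × Fin N) (Fin N × Fin N) ℂ :=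
  fun p q => Φ (Matrix.single q.1 q.2 1) p.1 p.2

/-- Hilbert–Schmidt norm of a matrix. -/
def hsNorm {n : Type*} [Fintype n] [DecidableEq n] (M : Matrix n n ℂ) : ℝ :=
  Real.sqrt ((M * Mᴴ).trace.re)

/-- Largest singular value of the superoperator of `Φ`, as the operator norm w.r.t. HS norm. -/
def sigma1 {N : ℕ} (Φ : Matrix (Fin N) (Fin N) ℂ →ₗ[ℂ] Matrix (Fin N) (Fin N) ℂ) : ℝ :=
  sSup {r : ℝ | ∃ M : Matrix (Fin N) (Fin N) ℂ, hsNorm M = 1 ∧ r = hsNorm (Φ M)}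

/-- Sum of the (at most) `m` largest entries of a nonnegative vector. -/
def partialMax {ι : Type*} [Fintype ι] (v : ι → ℝ) (m : ℕ) : ℝ :=
  sSup {t : ℝ | ∃ s : Finset ι, s.card ≤ m ∧ t = ∑ i ∈ s, v i}

/-- `Majorizes w v` means `v ≺ w` (for nonnegative vectors, possibly of different lengths). -/
def Majorizes {ι κ : Type*} [Fintype ι] [Fintype κ] (w : ι → ℝ) (v : κ → ℝ) : Prop :=
  (∑ i, v i = ∑ i, w i) ∧ ∀ m : ℕ, partialMax v m ≤ partialMax w m


/-!
Write `M = H + i K` with `H`, `K` Hermitian. A positive map sends Hermitian matrices to Hermitian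
ones, and `tr (H K)` is real for Hermitian `H`, `K`, so both `‖M‖²` and `‖Φ M‖²` split as the sums
of the corresponding squares for `H` and `K`. For Hermitian `H = H⁺ - H⁻` the positive semidefinite
`H⁺ + H⁻` has the same norm (as `H⁺ H⁻ = 0`) and an image at least as large as `Φ H`, because the
cross term `tr (Φ H⁺ · Φ H⁻)` is nonnegative. After normalising these witnesses for `H` and `K`,
the one with the larger image does the job.
-/

section HilbertSchmidtNorm

variable {n : Type*} [Fintype n]

theorem Matrix.re_trace_mul_conjTranspose_self_nonneg (X : Matrix n n ℂ) : 0 ≤ (X * Xᴴ).trace.re :=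
  (Complex.nonneg_iff.mp (posSemidef_self_mul_conjTranspose X).trace_nonneg).1

variable [DecidableEq n]

theorem Matrix.PosSemidef.re_trace_mul_nonneg {A B : Matrix n n ℂ} (hA : A.PosSemidef)
    (hB : B.PosSemidef) : 0 ≤ (A * B).trace.re := by
  obtain ⟨C, rfl⟩ : ∃ C : Matrix n n ℂ, A = Cᴴ * C := by
    open scoped MatrixOrder in
    exact CStarAlgebra.nonneg_iff_eq_star_mul_self.mp hA.nonneg
  rw [Matrix.mul_assoc, trace_mul_comm]
  exact (Complex.nonneg_iff.mp (hB.mul_mul_conjTranspose_same C).trace_nonneg).1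

theorem hsNorm_nonneg (X : Matrix n n ℂ) : 0 ≤ hsNorm X := Real.sqrt_nonneg _

theorem hsNorm_sq (X : Matrix n n ℂ) : hsNorm X ^ 2 = (X * Xᴴ).trace.re :=
  Real.sq_sqrt (X.re_trace_mul_conjTranspose_self_nonneg)

theorem hsNorm_eq_zero {X : Matrix n n ℂ} : hsNorm X = 0 ↔ X = 0 := by
  have him : (X * Xᴴ).trace.im = 0 :=
    (Complex.nonneg_iff.mp (posSemidef_self_mul_conjTranspose X).trace_nonneg).2.symm
  rw [hsNorm, Real.sqrt_eq_zero X.re_trace_mul_conjTranspose_self_nonneg,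
    ← trace_mul_conjTranspose_self_eq_zero_iff, Complex.ext_iff]
  simp [him]

@[simp]
theorem hsNorm_zero : hsNorm (0 : Matrix n n ℂ) = 0 := hsNorm_eq_zero.mpr rfl

theorem hsNorm_smul (c : ℂ) (X : Matrix n n ℂ) : hsNorm (c • X) = ‖c‖ * hsNorm X := by
  rw [hsNorm, hsNorm, conjTranspose_smul, Matrix.smul_mul, Matrix.mul_smul, trace_smul,
    trace_smul, smul_smul, smul_eq_mul, Complex.star_def, Complex.mul_conj, Complex.re_ofReal_mul,
    Real.sqrt_mul (Complex.normSq_nonneg c), Complex.normSq_eq_norm_sq,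
    Real.sqrt_sq (norm_nonneg c)]

theorem hsNorm_add_sq (A B : Matrix n n ℂ) :
    hsNorm (A + B) ^ 2 = hsNorm A ^ 2 + hsNorm B ^ 2 + 2 * (A * Bᴴ).trace.re := by
  have hBA : (B * Aᴴ).trace.re = (A * Bᴴ).trace.re := by
    rw [← Complex.conj_re, ← Complex.star_def, ← trace_conjTranspose, conjTranspose_mul,
      conjTranspose_conjTranspose]
  simp only [hsNorm_sq, conjTranspose_add, add_mul, mul_add, trace_add, Complex.add_re, hBA]
  ring

theorem hsNorm_sub_sq (A B : Matrix n n ℂ) :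
    hsNorm (A - B) ^ 2 = hsNorm A ^ 2 + hsNorm B ^ 2 - 2 * (A * Bᴴ).trace.re := by
  have hneg : hsNorm (-B) = hsNorm B := by simpa using hsNorm_smul (-1) B
  rw [sub_eq_add_neg, hsNorm_add_sq, hneg, conjTranspose_neg, Matrix.mul_neg, trace_neg,
    Complex.neg_re]
  ring

theorem hsNorm_add_I_smul_sq {H K : Matrix n n ℂ} (hH : H.IsHermitian) (hK : K.IsHermitian) :
    hsNorm (H + Complex.I • K) ^ 2 = hsNorm H ^ 2 + hsNorm K ^ 2 := by
  have hreal : (H * K).trace.im = 0 := by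
    rw [← Complex.conj_eq_iff_im, ← Complex.star_def, ← trace_conjTranspose, conjTranspose_mul,
      hH.eq, hK.eq, trace_mul_comm]
  rw [hsNorm_add_sq, hsNorm_smul, Complex.norm_I, one_mul, conjTranspose_smul, hK.eq,
    Matrix.mul_smul, trace_smul, smul_eq_mul]
  simp [hreal]

theorem exists_posSemidef_hsNorm_eq_one [Nonempty n] :
    ∃ P : Matrix n n ℂ, P.PosSemidef ∧ hsNorm P = 1 := by
  obtain ⟨i⟩ := ‹Nonempty n›
  refine ⟨diagonal (Pi.single i 1), .diagonal fun j => ?_, ?_⟩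
  · rcases eq_or_ne j i with rfl | h <;> simp [*]
  · simp [hsNorm, diagonal_conjTranspose, trace_diagonal, Pi.single_apply]

end HilbertSchmidtNorm

def IsPositiveMap {n m : Type*} (Φ : Matrix n n ℂ →ₗ[ℂ] Matrix m m ℂ) : Prop :=
  ∀ P : Matrix n n ℂ, P.PosSemidef → (Φ P).PosSemidef

theorem IsCPTP.isPositiveMap {N : ℕ} {Φ : Matrix (Fin N) (Fin N) ℂ →ₗ[ℂ] Matrix (Fin N) (Fin N) ℂ}
    (hΦ : IsCPTP Φ) : IsPositiveMap Φ := by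
  obtain ⟨k, A, hKraus, -⟩ := hΦ
  intro P hP
  rw [hKraus]
  exact posSemidef_sum _ fun i _ => hP.mul_mul_conjTranspose_same (A i)

namespace IsPositiveMap

open scoped MatrixOrder ComplexStarModule

variable {n m : Type*} [Fintype n] [DecidableEq n] {Φ : Matrix n n ℂ →ₗ[ℂ] Matrix m m ℂ}

theorem isHermitian_map (hΦ : IsPositiveMap Φ) {H : Matrix n n ℂ} (hH : H.IsHermitian) :
    (Φ H).IsHermitian := by
  rw [← CFC.posPart_sub_negPart H hH.isSelfAdjoint, map_sub]
  exact (hΦ _ (CFC.posPart_nonneg H).posSemidef).1.sub (hΦ _ (CFC.negPart_nonneg H).posSemidef).1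

variable [Fintype m] [DecidableEq m]

theorem exists_posSemidef_hsNorm_eq_of_isHermitian (hΦ : IsPositiveMap Φ) {H : Matrix n n ℂ}
    (hH : H.IsHermitian) :
    ∃ P : Matrix n n ℂ, P.PosSemidef ∧ hsNorm P = hsNorm H ∧ hsNorm (Φ H) ≤ hsNorm (Φ P) := by
  obtain ⟨P, Q, hP, hQ, hPQ, rfl⟩ : ∃ P Q : Matrix n n ℂ,
      P.PosSemidef ∧ Q.PosSemidef ∧ P * Q = 0 ∧ H = P - Q :=
    ⟨H⁺, H⁻, (CFC.posPart_nonneg H).posSemidef, (CFC.negPart_nonneg H).posSemidef,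
      CFC.posPart_mul_negPart H, (CFC.posPart_sub_negPart H hH.isSelfAdjoint).symm⟩
  have horth : (P * Qᴴ).trace.re = 0 := by rw [hQ.1.eq, hPQ, trace_zero, Complex.zero_re]
  have hcross : 0 ≤ (Φ P * (Φ Q)ᴴ).trace.re := by
    rw [(hΦ Q hQ).1.eq]
    exact (hΦ P hP).re_trace_mul_nonneg (hΦ Q hQ)
  refine ⟨P + Q, hP.add hQ, ?_, ?_⟩
  · rw [← sq_eq_sq₀ (hsNorm_nonneg _) (hsNorm_nonneg _), hsNorm_add_sq, hsNorm_sub_sq, horth]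
    ring
  · rw [← pow_le_pow_iff_left₀ (hsNorm_nonneg _) (hsNorm_nonneg _) two_ne_zero, map_sub, map_add,
      hsNorm_add_sq, hsNorm_sub_sq]
    linarith

theorem exists_posSemidef_hsNorm_one_map_le_of_isHermitian [Nonempty n] (hΦ : IsPositiveMap Φ)
    {H : Matrix n n ℂ} (hH : H.IsHermitian) :
    ∃ P : Matrix n n ℂ, P.PosSemidef ∧ hsNorm P = 1 ∧ hsNorm (Φ H) ≤ hsNorm (Φ P) * hsNorm H := by
  rcases eq_or_ne H 0 with rfl | hH0
  · obtain ⟨E, hE, hE1⟩ := exists_posSemidef_hsNorm_eq_one (n := n)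
    exact ⟨E, hE, hE1, by simp⟩
  obtain ⟨P, hP, hPH, hle⟩ := hΦ.exists_posSemidef_hsNorm_eq_of_isHermitian hH
  have hpos : 0 < hsNorm H := (hsNorm_nonneg H).lt_of_ne' (hsNorm_eq_zero.not.mpr hH0)
  have hnorm : ‖(((hsNorm H)⁻¹ : ℝ) : ℂ)‖ = (hsNorm H)⁻¹ := by
    rw [Complex.norm_real, Real.norm_of_nonneg (inv_nonneg.mpr hpos.le)]
  refine ⟨(((hsNorm H)⁻¹ : ℝ) : ℂ) • P,
    hP.smul (Complex.zero_le_real.mpr (inv_nonneg.mpr hpos.le)), ?_, ?_⟩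
  · rw [hsNorm_smul, hnorm, hPH, inv_mul_cancel₀ hpos.ne']
  · rwa [map_smul, hsNorm_smul, hnorm, mul_right_comm, inv_mul_cancel₀ hpos.ne', one_mul]

theorem exists_posSemidef_hsNorm_one_map_le [Nonempty n] (hΦ : IsPositiveMap Φ)
    (M : Matrix n n ℂ) :
    ∃ P : Matrix n n ℂ, P.PosSemidef ∧ hsNorm P = 1 ∧ hsNorm (Φ M) ≤ hsNorm (Φ P) * hsNorm M := by
  set H : Matrix n n ℂ := ↑(ℜ M)
  set K : Matrix n n ℂ := ↑(ℑ M)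
  have hH : H.IsHermitian := (ℜ M).2
  have hK : K.IsHermitian := (ℑ M).2
  have hM : M = H + Complex.I • K := (realPart_add_I_smul_imaginaryPart M).symm
  have hnormM : hsNorm M ^ 2 = hsNorm H ^ 2 + hsNorm K ^ 2 := hM ▸ hsNorm_add_I_smul_sq hH hK
  have hnormΦM : hsNorm (Φ M) ^ 2 = hsNorm (Φ H) ^ 2 + hsNorm (Φ K) ^ 2 := by
    rw [hM, map_add, map_smul]
    exact hsNorm_add_I_smul_sq (hΦ.isHermitian_map hH) (hΦ.isHermitian_map hK)
  obtain ⟨P₁, hP₁, hP₁1, hle₁⟩ := hΦ.exists_posSemidef_hsNorm_one_map_le_of_isHermitian hH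
  obtain ⟨P₂, hP₂, hP₂1, hle₂⟩ := hΦ.exists_posSemidef_hsNorm_one_map_le_of_isHermitian hK
  have hbound : ∀ c, hsNorm (Φ P₁) ≤ c → hsNorm (Φ P₂) ≤ c → hsNorm (Φ M) ≤ c * hsNorm M := by
    intro c h₁ h₂
    have hc : 0 ≤ c := (hsNorm_nonneg _).trans h₁
    refine le_of_pow_le_pow_left₀ two_ne_zero (mul_nonneg hc (hsNorm_nonneg M)) ?_
    calc hsNorm (Φ M) ^ 2 = hsNorm (Φ H) ^ 2 + hsNorm (Φ K) ^ 2 := hnormΦM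
      _ ≤ (c * hsNorm H) ^ 2 + (c * hsNorm K) ^ 2 := add_le_add
          (pow_le_pow_left₀ (hsNorm_nonneg _)
            (hle₁.trans (mul_le_mul_of_nonneg_right h₁ (hsNorm_nonneg H))) 2)
          (pow_le_pow_left₀ (hsNorm_nonneg _)
            (hle₂.trans (mul_le_mul_of_nonneg_right h₂ (hsNorm_nonneg K))) 2)
      _ = (c * hsNorm M) ^ 2 := by rw [mul_pow, mul_pow, mul_pow, hnormM]; ring
  rcases le_total (hsNorm (Φ P₁)) (hsNorm (Φ P₂)) with h | h
  · exact ⟨P₂, hP₂, hP₂1, hbound _ h le_rfl⟩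
  · exact ⟨P₁, hP₁, hP₁1, hbound _ le_rfl h⟩

end IsPositiveMap

theorem exists_posSemidef_maximizer {N : ℕ} (hN : 0 < N)
    (Φ : Matrix (Fin N) (Fin N) ℂ →ₗ[ℂ] Matrix (Fin N) (Fin N) ℂ) (hΦ : IsCPTP Φ)
    (M : Matrix (Fin N) (Fin N) ℂ) (hM : hsNorm M = 1) :
    ∃ P : Matrix (Fin N) (Fin N) ℂ, P.PosSemidef ∧ hsNorm P = 1 ∧
      hsNorm (Φ M) ≤ hsNorm (Φ P) := by
  have : Nonempty (Fin N) := ⟨⟨0, hN⟩⟩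
  simpa only [hM, mul_one] using hΦ.isPositiveMap.exists_posSemidef_hsNorm_one_map_le M

end
end

section
/- For any CPTP map Φ acting on an N-dimensional quantum system, the sum of the von Neumann entropy of the normalized Choi matrix and the Shannon entropy of the normalized singular values of the superoperator is at least ln N: S^map(Φ) + S^rec(Φ) ≥ ln N. -/
open Matrix
open scoped BigOperators Kronecker ComplexOrder

noncomputable section

/-! Write `a` and `b` for the singular values of the Choi matrix `D` and of the superoperator
matrix `S`. Each Shannon entropy dominates the collision entropy
`H₂(v) = 2 log ‖v‖₁ - log ‖v‖₂²`. Reshuffling the entries of `D` gives those of `S`, so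
`‖a‖₂² = ‖b‖₂² =: T`. Trace preservation gives `‖a‖₁ ≥ Re tr D = N`. For a channel
`‖Φ M‖₂ ≤ √N ‖M‖₂` in Hilbert–Schmidt norm, so every `b i ≤ √N` and hence `‖b‖₁ ≥ T / √N`.
Adding, `H₂(a) + H₂(b) ≥ (2 log N - log T) + (log T - log N) = log N`. -/

namespace Matrix

section Frobenius

open scoped Matrix.Norms.Frobenius

variable {𝕜 m n : Type*} [RCLike 𝕜] [Fintype m] [Fintype n]

theorem frobenius_norm_eq_norm_vec (A : Matrix m n 𝕜) : ‖A‖ = ‖WithLp.toLp 2 (vec A)‖ := by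
  rw [← sq_eq_sq₀ (norm_nonneg _) (norm_nonneg _), EuclideanSpace.norm_sq_eq]
  change ‖WithLp.toLp 2 fun i ↦ WithLp.toLp 2 fun j ↦ A i j‖ ^ 2 = _
  simp [PiLp.norm_sq_eq_of_L2, Fintype.sum_prod_type, Finset.sum_comm (γ := m)]

theorem re_trace_conjTranspose_mul_le (A B : Matrix m n 𝕜) :
    RCLike.re (Aᴴ * B).trace ≤ ‖A‖ * ‖B‖ := by
  rw [← star_vec_dotProduct_vec, frobenius_norm_eq_norm_vec, frobenius_norm_eq_norm_vec,
    dotProduct_comm, ← EuclideanSpace.inner_toLp_toLp]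
  exact re_inner_le_norm _ _

theorem re_trace_conjTranspose_mul_self (A : Matrix m n 𝕜) :
    RCLike.re (Aᴴ * A).trace = ‖A‖ ^ 2 := by
  rw [← star_vec_dotProduct_vec, frobenius_norm_eq_norm_vec, dotProduct_comm,
    ← EuclideanSpace.inner_toLp_toLp, inner_self_eq_norm_sq]

section Kraus

variable {ι : Type*} [Fintype ι] [DecidableEq n] {A : ι → Matrix n n 𝕜}

theorem trace_sum_mul_mul_conjTranspose (hA : ∑ i, (A i)ᴴ * A i = 1) (ρ : Matrix n n 𝕜) :
    (∑ i, A i * ρ * (A i)ᴴ).trace = ρ.trace := by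
  simp_rw [trace_sum, trace_mul_cycle (A _), ← trace_sum, ← Finset.sum_mul, hA, one_mul]

theorem sum_frobenius_norm_sq (hA : ∑ i, (A i)ᴴ * A i = 1) :
    ∑ i, ‖A i‖ ^ 2 = Fintype.card n := by
  simp_rw [← re_trace_conjTranspose_mul_self, ← map_sum, ← trace_sum, hA, trace_one]
  simp

theorem sum_frobenius_norm_mul_conjTranspose_sq (hA : ∑ i, (A i)ᴴ * A i = 1)
    (M : Matrix n n 𝕜) : ∑ i, ‖M * (A i)ᴴ‖ ^ 2 = ‖M‖ ^ 2 := by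
  rw [← frobenius_norm_conjTranspose M]
  simp_rw [← frobenius_norm_conjTranspose (M * _), ← re_trace_conjTranspose_mul_self,
    ← map_sum, ← trace_sum, conjTranspose_mul, conjTranspose_conjTranspose, ← mul_assoc,
    ← Finset.sum_mul, mul_assoc M, ← Finset.mul_sum, hA, mul_one]

theorem frobenius_norm_sum_mul_mul_conjTranspose_le (hA : ∑ i, (A i)ᴴ * A i = 1)
    (M : Matrix n n 𝕜) : ‖∑ i, A i * M * (A i)ᴴ‖ ≤ √(Fintype.card n) * ‖M‖ := by
  set X := ∑ i, A i * M * (A i)ᴴ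
  have hsplit : ‖X‖ ^ 2 = ∑ i, RCLike.re (((A i)ᴴ * X)ᴴ * (M * (A i)ᴴ)).trace := by
    rw [← re_trace_conjTranspose_mul_self, ← map_sum, ← trace_sum]
    congr 2
    simp_rw [conjTranspose_mul, conjTranspose_conjTranspose, X, Finset.mul_sum, mul_assoc]
  have hsum_sq : ∑ i, ‖(A i)ᴴ * X‖ ^ 2 ≤ Fintype.card n * ‖X‖ ^ 2 := by
    rw [← sum_frobenius_norm_sq hA, Finset.sum_mul]
    gcongr with i
    rw [← mul_pow, ← frobenius_norm_conjTranspose (A i)]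
    gcongr
    exact frobenius_norm_mul _ _
  have hCS : ‖X‖ ^ 2 ≤ (√(Fintype.card n) * ‖M‖) * ‖X‖ := calc
    ‖X‖ ^ 2 ≤ ∑ i, ‖(A i)ᴴ * X‖ * ‖M * (A i)ᴴ‖ :=
      hsplit ▸ Finset.sum_le_sum fun i _ ↦ re_trace_conjTranspose_mul_le _ _
    _ ≤ √(∑ i, ‖(A i)ᴴ * X‖ ^ 2) * √(∑ i, ‖M * (A i)ᴴ‖ ^ 2) :=
      Real.sum_mul_le_sqrt_mul_sqrt _ _ _
    _ ≤ √(Fintype.card n * ‖X‖ ^ 2) * √(‖M‖ ^ 2) := by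
      rw [sum_frobenius_norm_mul_conjTranspose_sq hA]
      gcongr
    _ = (√(Fintype.card n) * ‖M‖) * ‖X‖ := by
      rw [Real.sqrt_mul (Nat.cast_nonneg _), Real.sqrt_sq (norm_nonneg _),
        Real.sqrt_sq (norm_nonneg _)]
      ring
  rcases (norm_nonneg X).eq_or_lt with hX | hX
  · rw [← hX]; positivity
  · exact le_of_mul_le_mul_right (by rwa [sq] at hCS) hX

end Kraus

end Frobenius

end Matrix

section SingularValues

variable {n : Type*} [Fintype n] [DecidableEq n] (X : Matrix n n ℂ)

def leftSingularVectors : OrthonormalBasis n ℂ (EuclideanSpace ℂ n) :=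
  (posSemidef_self_mul_conjTranspose X).1.eigenvectorBasis

theorem singularValues_nonneg (i : n) : 0 ≤ singularValues X i :=
  Real.sqrt_nonneg _

theorem sq_singularValues (i : n) :
    singularValues X i ^ 2 = (posSemidef_self_mul_conjTranspose X).1.eigenvalues i :=
  Real.sq_sqrt ((posSemidef_self_mul_conjTranspose X).eigenvalues_nonneg i)

open scoped Matrix.Norms.Frobenius in
theorem sum_sq_singularValues : ∑ i, singularValues X i ^ 2 = ‖X‖ ^ 2 := by
  rw [← frobenius_norm_conjTranspose, ← re_trace_conjTranspose_mul_self,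
    conjTranspose_conjTranspose, (posSemidef_self_mul_conjTranspose X).1.trace_eq_sum_eigenvalues]
  simp [sq_singularValues]

theorem singularValues_eq_norm_conjTranspose_mulVec (i : n) :
    singularValues X i = ‖WithLp.toLp 2 (Xᴴ *ᵥ leftSingularVectors X i)‖ := by
  have hb : star (leftSingularVectors X i : n → ℂ) ⬝ᵥ leftSingularVectors X i = 1 := by
    rw [dotProduct_comm, ← EuclideanSpace.inner_eq_star_dotProduct,
      inner_self_eq_norm_sq_to_K, (leftSingularVectors X).orthonormal.1 i]
    simp
  have hw : (posSemidef_self_mul_conjTranspose X).1.eigenvalues i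
      = ‖WithLp.toLp 2 (Xᴴ *ᵥ leftSingularVectors X i)‖ ^ 2 := by
    rw [@norm_sq_eq_re_inner ℂ, EuclideanSpace.inner_toLp_toLp,
      dotProduct_comm, star_mulVec, conjTranspose_conjTranspose, ← dotProduct_mulVec,
      mulVec_mulVec, leftSingularVectors,
      (posSemidef_self_mul_conjTranspose X).1.mulVec_eigenvectorBasis, ← leftSingularVectors,
      dotProduct_smul, hb]
    simp
  rw [singularValues, hw, Real.sqrt_sq (norm_nonneg _)]

theorem norm_leftSingularVectors (i : n) : ‖leftSingularVectors X i‖ = 1 :=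
  (leftSingularVectors X).orthonormal.1 i

open scoped Matrix.Norms.L2Operator in
theorem singularValues_le_of_norm_mulVec_le {C : ℝ}
    (h : ∀ v : n → ℂ, ‖WithLp.toLp 2 (X *ᵥ v)‖ ≤ C * ‖WithLp.toLp 2 v‖) (i : n) :
    singularValues X i ≤ C := by
  have hC : 0 ≤ C := by
    simpa [norm_leftSingularVectors] using (norm_nonneg _).trans (h (leftSingularVectors X i))
  have hX : ‖X‖ ≤ C := by
    rw [cstar_norm_def]
    refine ContinuousLinearMap.opNorm_le_bound _ hC fun v ↦ ?_
    simpa [← toEuclideanCLM_toLp] using h v.ofLp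
  calc singularValues X i = ‖WithLp.toLp 2 (Xᴴ *ᵥ leftSingularVectors X i)‖ :=
        singularValues_eq_norm_conjTranspose_mulVec X i
    _ ≤ ‖Xᴴ‖ * ‖leftSingularVectors X i‖ := l2_opNorm_mulVec _ _
    _ = ‖X‖ := by rw [l2_opNorm_conjTranspose, norm_leftSingularVectors, mul_one]
    _ ≤ C := hX

theorem re_trace_le_sum_singularValues : X.trace.re ≤ ∑ i, singularValues X i := by
  have htrace : X.trace
      = ∑ i, star (leftSingularVectors X i : n → ℂ) ⬝ᵥ (X *ᵥ leftSingularVectors X i) := by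
    set U := (posSemidef_self_mul_conjTranspose X).1.eigenvectorUnitary
    calc X.trace = (star (U : Matrix n n ℂ) * (X * U)).trace := by
          rw [trace_mul_comm, mul_assoc, Unitary.mul_star_self_of_mem U.2, mul_one]
      _ = _ := by
        simp [trace, mul_apply, dotProduct, mulVec, leftSingularVectors, U, Finset.mul_sum]
  rw [htrace, Complex.re_sum]
  gcongr with i
  have hstar := star_mulVec Xᴴ (leftSingularVectors X i)
  rw [conjTranspose_conjTranspose] at hstar
  rw [dotProduct_mulVec, ← hstar, dotProduct_comm, ← EuclideanSpace.inner_toLp_toLp,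
    singularValues_eq_norm_conjTranspose_mulVec]
  simpa [norm_leftSingularVectors] using re_inner_le_norm (𝕜 := ℂ) _ (leftSingularVectors X i)

end SingularValues

section Entropy

variable {ι : Type*} [Fintype ι]

theorem mul_log_le_mul_log_add_sq_div_sub {p c : ℝ} (hp : 0 ≤ p) (hc : 0 < c) :
    p * Real.log p ≤ p * Real.log c + p ^ 2 / c - p := by
  rcases hp.eq_or_lt with rfl | hp
  · simp
  have h := Real.log_le_sub_one_of_pos (div_pos hp hc)
  rw [Real.log_div hp.ne' hc.ne'] at h
  have := mul_le_mul_of_nonneg_left h hp.le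
  field_simp at this ⊢
  nlinarith [this]

theorem sum_sq_pos_of_sum_ne_zero {v : ι → ℝ} (hs : ∑ i, v i ≠ 0) : 0 < ∑ i, v i ^ 2 := by
  obtain ⟨i, -, hi⟩ := Finset.exists_ne_zero_of_sum_ne_zero hs
  exact (pow_two_pos_of_ne_zero hi).trans_le
    (Finset.single_le_sum (fun j _ ↦ sq_nonneg (v j)) (Finset.mem_univ i))

theorem sum_mul_log_le_log_sum_sq {p : ι → ℝ} (hp : ∀ i, 0 ≤ p i) (hsum : ∑ i, p i = 1) :
    ∑ i, p i * Real.log (p i) ≤ Real.log (∑ i, p i ^ 2) := by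
  set c := ∑ i, p i ^ 2
  have hc : 0 < c := sum_sq_pos_of_sum_ne_zero (hsum ▸ one_ne_zero)
  calc ∑ i, p i * Real.log (p i) ≤ ∑ i, (p i * Real.log c + p i ^ 2 / c - p i) :=
        Finset.sum_le_sum fun i _ ↦ mul_log_le_mul_log_add_sq_div_sub (hp i) hc
    _ = Real.log c := by
        rw [Finset.sum_sub_distrib, Finset.sum_add_distrib, ← Finset.sum_mul, ← Finset.sum_div,
          hsum, div_self hc.ne']
        ring

theorem renyiH_two_eq_neg_log (v : ι → ℝ) :
    renyiH 2 v = -Real.log (∑ i, (v i / ∑ j, v j) ^ 2) := by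
  norm_num [renyiH]

theorem renyiH_two_le_shannonH {v : ι → ℝ} (hv : ∀ i, 0 ≤ v i) : renyiH 2 v ≤ shannonH v := by
  rw [renyiH_two_eq_neg_log, shannonH, neg_le_neg_iff]
  rcases eq_or_ne (∑ j, v j) 0 with hs | hs
  · simp [hs]
  refine sum_mul_log_le_log_sum_sq (fun i ↦ div_nonneg (hv i) ?_) ?_
  · exact Finset.sum_nonneg fun j _ ↦ hv j
  · rw [← Finset.sum_div, div_self hs]

theorem renyiH_two_eq {v : ι → ℝ} (hs : ∑ i, v i ≠ 0) :
    renyiH 2 v = 2 * Real.log (∑ i, v i) - Real.log (∑ i, v i ^ 2) := by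
  simp_rw [renyiH_two_eq_neg_log, div_pow, ← Finset.sum_div]
  rw [Real.log_div (sum_sq_pos_of_sum_ne_zero hs).ne' (pow_ne_zero 2 hs), Real.log_pow]
  push_cast
  ring

theorem two_mul_log_sub_log_sum_sq_le_renyiH_two {v : ι → ℝ} {t : ℝ} (ht : 0 < t)
    (hv : t ≤ ∑ i, v i) : 2 * Real.log t - Real.log (∑ i, v i ^ 2) ≤ renyiH 2 v := by
  rw [renyiH_two_eq (ht.trans_le hv).ne']
  gcongr

theorem log_sum_sq_sub_two_mul_log_le_renyiH_two {v : ι → ℝ} {c : ℝ} (hv : ∀ i, 0 ≤ v i)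
    (hvc : ∀ i, v i ≤ c) (hpos : 0 < ∑ i, v i ^ 2) :
    Real.log (∑ i, v i ^ 2) - 2 * Real.log c ≤ renyiH 2 v := by
  obtain ⟨i, -, hi⟩ := Finset.exists_ne_zero_of_sum_ne_zero hpos.ne'
  have hc : 0 < c := (hv i).lt_of_ne' (by simpa using hi) |>.trans_le (hvc i)
  have hsum : (∑ i, v i ^ 2) / c ≤ ∑ i, v i := by
    rw [div_le_iff₀ hc, Finset.sum_mul]
    gcongr with i
    rw [sq]
    exact mul_le_mul_of_nonneg_left (hvc i) (hv i)
  convert two_mul_log_sub_log_sum_sq_le_renyiH_two (div_pos hpos hc) hsum using 1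
  rw [Real.log_div hpos.ne' hc.ne']
  ring

end Entropy

section Channel

open scoped Matrix.Norms.Frobenius

variable {N : ℕ} (Φ : Matrix (Fin N) (Fin N) ℂ →ₗ[ℂ] Matrix (Fin N) (Fin N) ℂ)

theorem trace_choiMatrix (hΦ : ∀ ρ, (Φ ρ).trace = ρ.trace) : (choiMatrix Φ).trace = N := by
  calc (choiMatrix Φ).trace = ∑ b, (Φ (single b b 1)).trace := by
        rw [trace, Fintype.sum_prod_type, Finset.sum_comm]
        rfl
    _ = N := by simp [hΦ]

theorem frobenius_norm_superMatrix : ‖superMatrix Φ‖ = ‖choiMatrix Φ‖ := by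
  simp only [frobenius_norm_def, choiMatrix, superMatrix, Fintype.sum_prod_type]
  congr 1
  exact Finset.sum_congr rfl fun _ _ ↦ Finset.sum_comm

theorem superMatrix_mulVec_vec_transpose (M : Matrix (Fin N) (Fin N) ℂ) :
    superMatrix Φ *ᵥ vec Mᵀ = vec (Φ M)ᵀ := by
  ext p
  have hsingle : ∀ a b, single a b (M a b) = M a b • single a b 1 := fun a b ↦ by
    rw [smul_single, smul_eq_mul, mul_one]
  conv_rhs => rw [matrix_eq_sum_single M]
  simp only [vec, transpose_apply, hsingle, map_sum, map_smul, Matrix.sum_apply,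
    Matrix.smul_apply, smul_eq_mul]
  simp [superMatrix, mulVec, dotProduct, Fintype.sum_prod_type, mul_comm]

variable {Φ}

theorem norm_superMatrix_mulVec_le {ι : Type*} [Fintype ι] {A : ι → Matrix (Fin N) (Fin N) ℂ}
    (hK : ∀ ρ, Φ ρ = ∑ i, A i * ρ * (A i)ᴴ) (hA : ∑ i, (A i)ᴴ * A i = 1)
    (v : Fin N × Fin N → ℂ) :
    ‖WithLp.toLp 2 (superMatrix Φ *ᵥ v)‖ ≤ √N * ‖WithLp.toLp 2 v‖ := by
  have hv : v = vec (of (Function.curry v))ᵀ := rfl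
  rw [hv, superMatrix_mulVec_vec_transpose, ← frobenius_norm_eq_norm_vec,
    ← frobenius_norm_eq_norm_vec, frobenius_norm_transpose, frobenius_norm_transpose, hK]
  simpa using frobenius_norm_sum_mul_mul_conjTranspose_le hA _

end Channel

theorem entropic_tradeoff_general {N : ℕ} (hN : 0 < N)
    (Φ : Matrix (Fin N) (Fin N) ℂ →ₗ[ℂ] Matrix (Fin N) (Fin N) ℂ) (hΦ : IsCPTP Φ) :
    Real.log N ≤ shannonH (singularValues (choiMatrix Φ))
      + shannonH (singularValues (superMatrix Φ)) := by
  obtain ⟨k, A, hK, hA⟩ := hΦ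
  have hN' : (0 : ℝ) < N := Nat.cast_pos.2 hN
  set a := singularValues (choiMatrix Φ)
  set b := singularValues (superMatrix Φ)
  have hNa : (N : ℝ) ≤ ∑ i, a i := by
    have htp : ∀ ρ, (Φ ρ).trace = ρ.trace := fun ρ ↦ by
      rw [hK, trace_sum_mul_mul_conjTranspose hA]
    simpa [trace_choiMatrix Φ htp] using re_trace_le_sum_singularValues (choiMatrix Φ)
  have hab : ∑ i, b i ^ 2 = ∑ i, a i ^ 2 := by
    rw [sum_sq_singularValues, sum_sq_singularValues, frobenius_norm_superMatrix]
  have hb : ∀ i, b i ≤ √N :=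
    singularValues_le_of_norm_mulVec_le _ (norm_superMatrix_mulVec_le hK hA)
  have hT : 0 < ∑ i, a i ^ 2 := sum_sq_pos_of_sum_ne_zero (hN'.trans_le hNa).ne'
  calc Real.log N
      = (2 * Real.log N - Real.log (∑ i, a i ^ 2))
        + (Real.log (∑ i, b i ^ 2) - 2 * Real.log √N) := by
        rw [hab, Real.log_sqrt (Nat.cast_nonneg N)]
        ring
    _ ≤ renyiH 2 a + renyiH 2 b :=
        add_le_add (two_mul_log_sub_log_sum_sq_le_renyiH_two hN' hNa)
          (log_sum_sq_sub_two_mul_log_le_renyiH_two (singularValues_nonneg _) hb (hab ▸ hT))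
    _ ≤ shannonH a + shannonH b :=
        add_le_add (renyiH_two_le_shannonH (singularValues_nonneg _))
          (renyiH_two_le_shannonH (singularValues_nonneg _))

end
end
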